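/- If Euclid's alternating subtraction (the Euclidean algorithm) applied to two positive integers terminates with remainder 1 (the unit), then the two numbers are coprime. -/
import Mathlib

def euclidSeq (a b : ℕ) : ℕ → ℕ
  | 0 => a
  | 1 => b
  | n + 2 => euclidSeq a b n % euclidSeq a b (n + 1)

lemma gcd_dvd_euclidSeq (a b : ℕ) : ∀ n, Nat.gcd a b ∣ euclidSeq a b n := by
  intro n
  induction n using Nat.strong_induction_on with
  | _ n ih =>
    match n with
    | 0 => exact Nat.gcd_dvd_left a b
    | 1 => exact Nat.gcd_dvd_right a b
    | n + 2 =>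
      have h1 := ih n (by omega)
      have h2 := ih (n + 1) (by omega)
      exact (Nat.dvd_mod_iff h2).mpr h1

theorem euclid_reaches_unit_imp_coprime (a b : ℕ) (ha : 0 < a) (hb : 0 < b)
    (h : ∃ n, euclidSeq a b n = 1) : Nat.Coprime a b := by
  obtain ⟨n, hn⟩ := h
  have := gcd_dvd_euclidSeq a b n
  rw [hn] at this
  exact Nat.eq_one_of_dvd_one this
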